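/- (S_2^≠, S_2^≠, [1, ∞), [1, ∞))↓ holds: from every configuration in which both robots satisfy condition S_2^≠ with observed distances at least 1, every fair SSynch execution of Algorithm 1 solves rendezvous. -/

import Mathlib

/-- Points in the plane. -/
abbrev Pt := EuclideanSpace ℝ (Fin 2)

/-- Observed directions. -/
inductive Dir | left | right
deriving DecidableEq

/-- The six internal states of Algorithm 1. -/
inductive St | start | s1 | s2 (d : Dir) | s3 | finish
deriving DecidableEq

/-- A local coordinate frame: an orthogonal linear map of the plane. -/
abbrev Frame := Pt ≃ₗᵢ[ℝ] Pt

/-- Observed direction of a local vector `v`: `right` if its first coordinate is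
positive, or is zero with positive second coordinate; `left` otherwise. -/
noncomputable def obsDir (v : Pt) : Dir :=
  if 0 < v 0 ∨ (v 0 = 0 ∧ 0 < v 1) then Dir.right else Dir.left

/-- Local vector observed by a robot with unit distance `u` and frame `A`,
located at `p`, looking at the other robot at `q`. -/
noncomputable def obsVec (u : ℝ) (A : Frame) (p q : Pt) : Pt := u⁻¹ • (A (q - p))

/-- Observed distance. -/
noncomputable def obsDist (u : ℝ) (p q : Pt) : ℝ := ‖q - p‖ / u

/-- Algorithm 1: given the current state, the observed distance `d` and the
observed direction `dir`, returns the new state and the coefficient `μ` such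
that the (global) destination is `p + μ • (q - p)` (i.e. local destination `μ • v`). -/
noncomputable def algo1 (s : St) (d : ℝ) (dir : Dir) : St × ℝ :=
  if d = 0 then (s, 0)
  else match s with
  | .start => if d < 1 then (.s1, 1 - 1/d) else (.s2 dir, 1)
  | .s1 => if d ≤ 1 then (.finish, 0) else (.s2 dir, 1)
  | .s2 d' =>
      if dir = d' then (.finish, 1)
      else if d < 1/2 then (.finish, 0)
      else if d < 1 then (.s3, 1/2)
      else (.s2 d', 1/2)
  | .s3 => if d < 1/4 then (.finish, 0) else (.finish, 1)
  | .finish => if d ≤ 1 then (.finish, 0) else (.finish, 1)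

/-- A configuration: positions and internal states of the two robots
(robot `r` is `false`, robot `s` is `true`). -/
structure Config where
  pos : Bool → Pt
  st : Bool → St

/-- Result (new position, new state) of one activation of robot `i`. -/
noncomputable def stepRobot (u : Bool → ℝ) (A : Bool → Frame) (c : Config) (i : Bool) :
    Pt × St :=
  let p := c.pos i
  let q := c.pos (!i)
  let d := obsDist (u i) p q
  let dir := obsDir (obsVec (u i) (A i) p q)
  let r := algo1 (c.st i) d dir
  (p + r.2 • (q - p), r.1)

/-- One synchronous round in which exactly the robots `i` with `act i = true`
are activated; both activated robots observe the same (pre-round) configuration,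
and rigidly reach their computed destinations. -/
noncomputable def stepConfig (u : Bool → ℝ) (A : Bool → Frame) (act : Bool → Bool)
    (c : Config) : Config where
  pos i := if act i then (stepRobot u A c i).1 else c.pos i
  st i := if act i then (stepRobot u A c i).2 else c.st i

/-- The configuration after `n` rounds of the SSynch execution of Algorithm 1
under schedule `sched`, starting from `c0`. -/
noncomputable def run (u : Bool → ℝ) (A : Bool → Frame) (sched : ℕ → Bool → Bool)
    (c0 : Config) : ℕ → Config
  | 0 => c0
  | n + 1 => stepConfig u A (sched n) (run u A sched c0 n)

/-- A legal fair SSynch schedule: at every round a nonempty set of robots is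
activated, and each robot is activated infinitely often. -/
def FairSched (sched : ℕ → Bool → Bool) : Prop :=
  (∀ n, sched n false = true ∨ sched n true = true) ∧
  (∀ i n, ∃ m, n ≤ m ∧ sched m i = true)

/-- Rendezvous is solved: from some round on, the two robots occupy the same
point and never move again. -/
noncomputable def Solves (u : Bool → ℝ) (A : Bool → Frame) (sched : ℕ → Bool → Bool)
    (c0 : Config) : Prop :=
  ∃ N : ℕ, ∀ n, N ≤ n → ∀ i, (run u A sched c0 n).pos i = (run u A sched c0 N).pos false

/-- Conditions on a robot: one of the six internal states, or `S₂⁼` / `S₂≠`. -/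
inductive Cond | start | s1 | s2 (d : Dir) | s2eq | s2ne | s3 | finish

/-- A robot in state `s` whose currently observed direction is `dir`
satisfies the condition. -/
def Cond.sat : Cond → St → Dir → Prop
  | .start, s, _ => s = .start
  | .s1, s, _ => s = .s1
  | .s2 d', s, _ => s = .s2 d'
  | .s2eq, s, dir => s = .s2 dir
  | .s2ne, s, dir => ∃ d', s = St.s2 d' ∧ d' ≠ dir
  | .s3, s, _ => s = .s3
  | .finish, s, _ => s = .finish

/-- `(S_a, S_b, I_a, I_b)↓` : for every choice of the units and frames, from
every configuration in which robot `r` satisfies condition `Ca` with observed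
distance in `Ia` and robot `s` satisfies condition `Cb` with observed distance
in `Ib`, every fair SSynch execution of Algorithm 1 solves Rendezvous. -/
noncomputable def Down (Ca Cb : Cond) (Ia Ib : Set ℝ) : Prop :=
  ∀ (u : Bool → ℝ) (A : Bool → Frame), (∀ i, 0 < u i) →
    ∀ c0 : Config,
      Ca.sat (c0.st false)
        (obsDir (obsVec (u false) (A false) (c0.pos false) (c0.pos true))) →
      obsDist (u false) (c0.pos false) (c0.pos true) ∈ Ia →
      Cb.sat (c0.st true)
        (obsDir (obsVec (u true) (A true) (c0.pos true) (c0.pos false))) →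
      obsDist (u true) (c0.pos true) (c0.pos false) ∈ Ib →
      ∀ sched : ℕ → Bool → Bool, FairSched sched → Solves u A sched c0

/-!
A round multiplies the vector between the robots by `1 - μ_r - μ_s`, so both observed distances
scale by the same factor and both observed directions are kept, or both flipped when the factor is
negative. Starting from two robots in `S₂≠`, every round leads to coincidence or to one of six
classes of configurations, named after the states of a robot `i` and of the other robot `!i`, and
never back to a class earlier in the list
`BothS2ne, S3S2ne, FinishS2ne, S3S3, FinishS3, FinishS2eq`.
A class survives a round only in three ways: in `BothS2ne` and `FinishS2ne` the gap halves, which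
can happen only finitely often because some observed distance stays `≥ 1/2`; `S3S2ne` survives
while its `S₃` robot is inactive; and in the `Finish…` classes the finished robot is inert, so a
round in which the other robot is inactive changes nothing. Fairness ends each of these waits.
-/

theorem exists_of_wait {e P Q : ℕ → Prop} (he : ∀ n, ∃ m, n ≤ m ∧ e m)
    (hoff : ∀ n, P n → ¬ e n → P (n + 1) ∨ Q (n + 1))
    (hon : ∀ n, P n → e n → Q (n + 1))
    {n : ℕ} (hn : P n) : ∃ m, n ≤ m ∧ Q m := by
  obtain ⟨m, hnm, hm⟩ := he n
  obtain ⟨k, rfl⟩ := Nat.exists_eq_add_of_le hnm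
  induction k generalizing n with
  | zero => exact ⟨n + 1, n.le_succ, hon n hn hm⟩
  | succ k ih =>
    by_cases hen : e n
    · exact ⟨n + 1, n.le_succ, hon n hn hen⟩
    rcases hoff n hn hen with hP | hQ
    · obtain ⟨m, hm', hQ⟩ := ih hP (by omega) (by rwa [Nat.add_right_comm])
      exact ⟨m, by omega, hQ⟩
    · exact ⟨n + 1, n.le_succ, hQ⟩

theorem exists_of_halving {e P Q : ℕ → Prop} (he : ∀ n, ∃ m, n ≤ m ∧ e m)
    (f : ℕ → ℝ) {ε : ℝ} (hε : 0 < ε) (hlow : ∀ n, P n → ε ≤ f n)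
    (hoff : ∀ n, P n → ¬ e n → (P (n + 1) ∧ f (n + 1) ≤ f n) ∨ Q (n + 1))
    (hon : ∀ n, P n → e n → (P (n + 1) ∧ f (n + 1) ≤ f n / 2) ∨ Q (n + 1))
    {n : ℕ} (hn : P n) : ∃ m, n ≤ m ∧ Q m := by
  suffices key : ∀ k n, P n → f n < 2 ^ k * ε → ∃ m, n ≤ m ∧ Q m by
    obtain ⟨k, hk⟩ := pow_unbounded_of_one_lt (f n / ε) one_lt_two
    exact key k n hn ((div_lt_iff₀ hε).1 hk)
  intro k
  induction k with
  | zero => intro n hn hf; linarith [hlow n hn]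
  | succ k ih =>
    intro n hn hf
    obtain ⟨m, hnm, hQ | ⟨hP, hf'⟩⟩ := exists_of_wait he
      (P := fun n => P n ∧ f n < 2 ^ (k + 1) * ε)
      (Q := fun n => Q n ∨ (P n ∧ f n < 2 ^ k * ε))
      (fun n hn hen => (hoff n hn.1 hen).imp (fun h => ⟨h.1, h.2.trans_lt hn.2⟩) Or.inl)
      (fun n hn hen => (hon n hn.1 hen).elim
        (fun h => Or.inr ⟨h.1, by rw [pow_succ] at hn; linarith [hn.2, h.2]⟩) Or.inl)
      ⟨hn, hf⟩
    · exact ⟨m, hnm, hQ⟩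
    · obtain ⟨m', hm', hQ⟩ := ih m hP hf'
      exact ⟨m', hnm.trans hm', hQ⟩

namespace Dir

def flip : Dir → Dir
  | left => right
  | right => left

lemma eq_flip_of_ne {a b : Dir} (h : a ≠ b) : a = b.flip := by
  cases a <;> cases b <;> simp_all [flip]

end Dir

lemma obsDir_smul_of_pos {t : ℝ} (ht : 0 < t) (v : Pt) : obsDir (t • v) = obsDir v := by
  simp [obsDir, mul_pos_iff_of_pos_left ht, ht.ne']

lemma obsDir_neg {v : Pt} (hv : v ≠ 0) : obsDir (-v) = (obsDir v).flip := by
  have hv' : v 0 ≠ 0 ∨ v 1 ≠ 0 := by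
    by_contra! h
    exact hv (by ext i; fin_cases i <;> simp [h.1, h.2])
  simp only [obsDir, PiLp.neg_apply, Left.neg_pos_iff, neg_eq_zero]
  rcases lt_trichotomy (v 0) 0 with h0 | h0 | h0 <;>
    rcases lt_trichotomy (v 1) 0 with h1 | h1 | h1 <;>
    simp_all [Dir.flip, not_lt_of_gt, ne_of_lt, ne_of_gt]

lemma obsDir_smul_of_neg {t : ℝ} (ht : t < 0) {v : Pt} (hv : v ≠ 0) :
    obsDir (t • v) = (obsDir v).flip := by
  rw [← neg_neg t, neg_smul, ← smul_neg, obsDir_smul_of_pos (neg_pos.2 ht), obsDir_neg hv]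

namespace Config

def gap (c : Config) : Pt := c.pos true - c.pos false

noncomputable def odist (u : Bool → ℝ) (c : Config) (i : Bool) : ℝ :=
  obsDist (u i) (c.pos i) (c.pos (!i))

noncomputable def odir (u : Bool → ℝ) (A : Bool → Frame) (c : Config) (i : Bool) : Dir :=
  obsDir (obsVec (u i) (A i) (c.pos i) (c.pos (!i)))

def Coincident (c : Config) : Prop := c.pos false = c.pos true

noncomputable def outcome (u : Bool → ℝ) (A : Bool → Frame) (act : Bool → Bool) (c : Config)
    (j : Bool) : St × ℝ :=
  if act j then algo1 (c.st j) (c.odist u j) (c.odir u A j) else (c.st j, 0)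

variable {u : Bool → ℝ} {A : Bool → Frame} {act : Bool → Bool} {c c' : Config}

lemma pos_not_sub_pos (c : Config) (i : Bool) :
    c.pos (!i) - c.pos i = (if i then (-1 : ℝ) else 1) • c.gap := by
  cases i <;> simp [gap]

lemma odist_eq (c : Config) (i : Bool) : c.odist u i = ‖c.gap‖ / u i := by
  rw [odist, obsDist, pos_not_sub_pos, norm_smul]
  cases i <;> simp

lemma coincident_iff_gap_eq_zero : c.Coincident ↔ c.gap = 0 := by
  rw [Coincident, gap, sub_eq_zero, eq_comm]

lemma odist_nonneg (hu : ∀ j, 0 < u j) (i : Bool) : 0 ≤ c.odist u i := by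
  rw [odist_eq]
  exact div_nonneg (norm_nonneg _) (hu i).le

lemma odist_pos_of_pos (hu : ∀ j, 0 < u j) {j : Bool} (h : 0 < c.odist u j) (i : Bool) :
    0 < c.odist u i := by
  rw [odist_eq] at h ⊢
  exact div_pos ((div_pos_iff_of_pos_right (hu j)).1 h) (hu i)

lemma gap_ne_zero_of_odist_pos {i : Bool} (h : 0 < c.odist u i) : c.gap ≠ 0 := by
  intro h0
  simp [odist_eq, h0] at h

lemma obsVec_of_gap_eq {t : ℝ} (h : c'.gap = t • c.gap) (i : Bool) :
    obsVec (u i) (A i) (c'.pos i) (c'.pos (!i)) =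
      t • obsVec (u i) (A i) (c.pos i) (c.pos (!i)) := by
  rw [obsVec, obsVec, pos_not_sub_pos, pos_not_sub_pos, h, map_smul, map_smul, map_smul]
  module

lemma odist_of_gap_eq {t : ℝ} (h : c'.gap = t • c.gap) (i : Bool) :
    c'.odist u i = |t| * c.odist u i := by
  rw [odist_eq, odist_eq, h, norm_smul, Real.norm_eq_abs, mul_div_assoc]

lemma odir_of_gap_eq_of_pos {t : ℝ} (h : c'.gap = t • c.gap) (ht : 0 < t) (i : Bool) :
    c'.odir u A i = c.odir u A i := by
  rw [odir, odir, obsVec_of_gap_eq h, obsDir_smul_of_pos ht]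

lemma odir_of_gap_eq_of_neg (hu : ∀ j, 0 < u j) {t : ℝ} (h : c'.gap = t • c.gap) (ht : t < 0)
    (hc : c.gap ≠ 0) (i : Bool) : c'.odir u A i = (c.odir u A i).flip := by
  rw [odir, odir, obsVec_of_gap_eq h, obsDir_smul_of_neg ht]
  rw [obsVec, pos_not_sub_pos, map_smul]
  split_ifs <;> simp [(hu i).ne', hc]

lemma odist_of_gap_eq_half (h : c'.gap = (1/2 : ℝ) • c.gap) (i : Bool) :
    c'.odist u i = c.odist u i / 2 := by
  rw [odist_of_gap_eq h]
  norm_num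
  ring

lemma pos_stepConfig (j : Bool) :
    (stepConfig u A act c).pos j =
      c.pos j + (c.outcome u A act j).2 • (c.pos (!j) - c.pos j) := by
  simp only [stepConfig, stepRobot, outcome, odist, odir]
  split_ifs <;> simp

lemma st_stepConfig (j : Bool) : (stepConfig u A act c).st j = (c.outcome u A act j).1 := by
  simp only [stepConfig, stepRobot, outcome, odist, odir]
  split_ifs <;> rfl

lemma gap_stepConfig (i : Bool) :
    (stepConfig u A act c).gap =
      (1 - (c.outcome u A act i).2 - (c.outcome u A act (!i)).2) • c.gap := by
  cases i <;> simp only [gap, pos_stepConfig, pos_not_sub_pos] <;> simp <;> module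

lemma stepConfig_eq_self (h : ∀ j, c.outcome u A act j = (c.st j, 0)) :
    stepConfig u A act c = c := by
  have hpos : (stepConfig u A act c).pos = c.pos := funext fun j => by simp [pos_stepConfig, h]
  have hst : (stepConfig u A act c).st = c.st := funext fun j => by simp [st_stepConfig, h]
  calc stepConfig u A act c = ⟨(stepConfig u A act c).pos, (stepConfig u A act c).st⟩ := rfl
    _ = c := by rw [hpos, hst]

lemma stepConfig_of_outcome {i : Bool} {σ τ : St} {m n : ℝ}
    (hi : c.outcome u A act i = (σ, m)) (hj : c.outcome u A act (!i) = (τ, n)) :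
    (stepConfig u A act c).st i = σ ∧ (stepConfig u A act c).st (!i) = τ ∧
      (stepConfig u A act c).gap = (1 - m - n) • c.gap ∧
      (stepConfig u A act c).odist u i = |1 - m - n| * c.odist u i ∧
      (stepConfig u A act c).odist u (!i) = |1 - m - n| * c.odist u (!i) := by
  have hg : (stepConfig u A act c).gap = (1 - m - n) • c.gap := by simp [gap_stepConfig i, hi, hj]
  exact ⟨by simp [st_stepConfig, hi], by simp [st_stepConfig, hj], hg, odist_of_gap_eq hg i,
    odist_of_gap_eq hg (!i)⟩

lemma coincident_stepConfig {i : Bool}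
    (h : (c.outcome u A act i).2 + (c.outcome u A act (!i)).2 = 1) :
    (stepConfig u A act c).Coincident := by
  rw [coincident_iff_gap_eq_zero, gap_stepConfig i, sub_sub, h, sub_self, zero_smul]

lemma outcome_of_not_act {j : Bool} (h : act j = false) : c.outcome u A act j = (c.st j, 0) := by
  simp [outcome, h]

lemma outcome_of_coincident (h : c.Coincident) (j : Bool) :
    c.outcome u A act j = (c.st j, 0) := by
  have : c.odist u j = 0 := by simp [odist_eq, coincident_iff_gap_eq_zero.1 h]
  simp [outcome, this, algo1]

lemma outcome_of_finish {j : Bool} (hs : c.st j = .finish) (hd : c.odist u j ≤ 1) :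
    c.outcome u A act j = (.finish, 0) := by
  simp [outcome, algo1, hs, hd]

lemma outcome_of_s3_of_lt {j : Bool} (hs : c.st j = .s3) (ha : act j = true)
    (h0 : 0 < c.odist u j) (h : c.odist u j < 1/4) : c.outcome u A act j = (.finish, 0) := by
  simp [outcome, algo1, hs, ha, h0.ne']
  linarith

lemma outcome_of_s3_of_le {j : Bool} (hs : c.st j = .s3) (ha : act j = true)
    (h : 1/4 ≤ c.odist u j) : c.outcome u A act j = (.finish, 1) := by
  have h0 : c.odist u j ≠ 0 := by positivity
  simp [outcome, algo1, hs, ha, h0]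
  linarith

def IsS2ne (u : Bool → ℝ) (A : Bool → Frame) (c : Config) (j : Bool) : Prop :=
  Cond.s2ne.sat (c.st j) (c.odir u A j)

def IsS2eq (u : Bool → ℝ) (A : Bool → Frame) (c : Config) (j : Bool) : Prop :=
  Cond.s2eq.sat (c.st j) (c.odir u A j)

variable {j : Bool}

lemma outcome_of_isS2ne (hN : c.IsS2ne u A j) (ha : act j = true) (h0 : 0 < c.odist u j) :
    c.outcome u A act j =
      if c.odist u j < 1/2 then (.finish, 0)
      else if c.odist u j < 1 then (.s3, 1/2) else (c.st j, 1/2) := by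
  obtain ⟨d, hs, hd⟩ := hN
  simp only [outcome, ha, if_true, algo1, h0.ne', if_false, hs, Ne.symm hd]

lemma outcome_of_isS2ne_of_lt_half (hN : c.IsS2ne u A j) (ha : act j = true)
    (h0 : 0 < c.odist u j) (h : c.odist u j < 1/2) : c.outcome u A act j = (.finish, 0) := by
  rw [outcome_of_isS2ne hN ha h0, if_pos h]

lemma outcome_of_isS2ne_of_lt_one (hN : c.IsS2ne u A j) (ha : act j = true)
    (h1 : 1/2 ≤ c.odist u j) (h : c.odist u j < 1) : c.outcome u A act j = (.s3, 1/2) := by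
  rw [outcome_of_isS2ne hN ha (by linarith), if_neg (not_lt.2 h1), if_pos h]

lemma outcome_of_isS2ne_of_one_le (hN : c.IsS2ne u A j) (ha : act j = true)
    (h : 1 ≤ c.odist u j) : c.outcome u A act j = (c.st j, 1/2) := by
  rw [outcome_of_isS2ne hN ha (by linarith), if_neg (by linarith), if_neg (not_lt.2 h)]

lemma outcome_of_isS2eq (hE : c.IsS2eq u A j) (ha : act j = true) (h0 : 0 < c.odist u j) :
    c.outcome u A act j = (.finish, 1) := by
  simp only [IsS2eq, Cond.sat] at hE
  simp [outcome, ha, algo1, h0.ne', hE]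

lemma IsS2ne.of_gap_eq (hN : c.IsS2ne u A j) (hs : c'.st j = c.st j) {t : ℝ}
    (hg : c'.gap = t • c.gap) (ht : 0 < t) : c'.IsS2ne u A j := by
  rw [IsS2ne, hs, odir_of_gap_eq_of_pos hg ht]
  exact hN

lemma IsS2ne.isS2eq_of_gap_eq (hu : ∀ j, 0 < u j) (hN : c.IsS2ne u A j) (hs : c'.st j = c.st j)
    {t : ℝ} (hg : c'.gap = t • c.gap) (ht : t < 0) (hc : c.gap ≠ 0) : c'.IsS2eq u A j := by
  obtain ⟨d, hsd, hd⟩ := hN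
  rw [IsS2eq, Cond.sat, hs, hsd, odir_of_gap_eq_of_neg hu hg ht hc, ← Dir.eq_flip_of_ne hd]

lemma outcome_snd_of_isS2ne (hN : c.IsS2ne u A j) (ha : act j = true) (h : 1/2 ≤ c.odist u j) :
    (c.outcome u A act j).2 = 1/2 := by
  rw [outcome_of_isS2ne hN ha (by linarith), if_neg (not_lt.2 h)]
  split_ifs <;> rfl

def BothS2ne (u : Bool → ℝ) (A : Bool → Frame) (c : Config) : Prop :=
  (∀ j, c.IsS2ne u A j) ∧ ∃ j, 1/2 ≤ c.odist u j

def S3S2ne (u : Bool → ℝ) (A : Bool → Frame) (c : Config) (i : Bool) : Prop :=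
  c.st i = .s3 ∧ c.odist u i < 1/2 ∧ c.IsS2ne u A (!i) ∧
    (1/4 ≤ c.odist u i ∨ 1/2 ≤ c.odist u (!i))

def FinishS2ne (u : Bool → ℝ) (A : Bool → Frame) (c : Config) (i : Bool) : Prop :=
  c.st i = .finish ∧ c.odist u i ≤ 1 ∧ c.IsS2ne u A (!i) ∧ 1/2 ≤ c.odist u (!i)

def S3S3 (u : Bool → ℝ) (c : Config) (i : Bool) : Prop :=
  c.st i = .s3 ∧ c.odist u i < 1/4 ∧ c.st (!i) = .s3 ∧ 1/4 ≤ c.odist u (!i)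

def FinishS3 (u : Bool → ℝ) (c : Config) (i : Bool) : Prop :=
  c.st i = .finish ∧ c.odist u i ≤ 1 ∧ c.st (!i) = .s3 ∧ 1/4 ≤ c.odist u (!i)

def FinishS2eq (u : Bool → ℝ) (A : Bool → Frame) (c : Config) (i : Bool) : Prop :=
  c.st i = .finish ∧ c.odist u i ≤ 1 ∧ c.IsS2eq u A (!i) ∧ 0 < c.odist u (!i)

variable {i : Bool}

lemma stepConfig_eq_self_of_finish (hs : c.st i = .finish) (hd : c.odist u i ≤ 1)
    (hna : act (!i) = false) : stepConfig u A act c = c := by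
  refine stepConfig_eq_self fun j => ?_
  cases i <;> cases j <;> simp_all [outcome_of_finish, outcome_of_not_act]

lemma FinishS2eq.stepConfig (hF : c.FinishS2eq u A i) (ha : act (!i) = true) :
    (stepConfig u A act c).Coincident := by
  obtain ⟨hs, hd, hE, h0⟩ := hF
  apply coincident_stepConfig (i := i)
  rw [outcome_of_finish hs hd, outcome_of_isS2eq hE ha h0]
  norm_num

lemma FinishS3.stepConfig (hE : c.FinishS3 u i) (ha : act (!i) = true) :
    (stepConfig u A act c).Coincident := by
  obtain ⟨hs, hd, hs', hd'⟩ := hE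
  apply coincident_stepConfig (i := i)
  rw [outcome_of_finish hs hd, outcome_of_s3_of_le hs' ha hd']
  norm_num

lemma S3S3.stepConfig (hu : ∀ j, 0 < u j) (hD : c.S3S3 u i)
    (hact : act i = true ∨ act (!i) = true) :
    (stepConfig u A act c).Coincident ∨ (stepConfig u A act c).FinishS3 u i := by
  obtain ⟨hs, hd, hs', hd'⟩ := hD
  have h0 : 0 < c.odist u i := odist_pos_of_pos hu (j := !i) (by linarith) i
  cases ha : act (!i)
  · have hi := outcome_of_s3_of_lt (A := A) hs (hact.resolve_right (by simp [ha])) h0 hd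
    obtain ⟨hs₁, hs₂, -, hd₁, hd₂⟩ := stepConfig_of_outcome hi (outcome_of_not_act ha)
    norm_num at hd₁ hd₂
    exact Or.inr ⟨hs₁, by rw [hd₁]; linarith, by rw [hs₂, hs'], by rw [hd₂]; exact hd'⟩
  · left
    apply coincident_stepConfig (i := i)
    rw [outcome_of_s3_of_le hs' ha hd']
    cases hi : act i
    · simp [outcome_of_not_act hi]
    · simp [outcome_of_s3_of_lt hs hi h0 hd]

lemma stepConfig_of_finish_of_isS2ne_of_act (hi : c.outcome u A act i = (.finish, 0))
    (hd : c.odist u i ≤ 1) (hN : c.IsS2ne u A (!i)) (hd' : 1/2 ≤ c.odist u (!i))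
    (ha : act (!i) = true) :
    ((stepConfig u A act c).FinishS2ne u A i ∧
        (stepConfig u A act c).gap = (1/2 : ℝ) • c.gap) ∨
      (stepConfig u A act c).FinishS3 u i := by
  rcases lt_or_ge (c.odist u (!i)) 1 with h1 | h1
  · obtain ⟨hs₁, hs₂, -, hd₁, hd₂⟩ :=
      stepConfig_of_outcome hi (outcome_of_isS2ne_of_lt_one hN ha hd' h1)
    norm_num at hd₁ hd₂
    exact Or.inr ⟨hs₁, by rw [hd₁]; linarith, hs₂, by rw [hd₂]; linarith⟩
  · obtain ⟨hs₁, hs₂, hg, hd₁, hd₂⟩ :=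
      stepConfig_of_outcome hi (outcome_of_isS2ne_of_one_le hN ha h1)
    norm_num at hg hd₁ hd₂
    exact Or.inl ⟨⟨hs₁, by rw [hd₁]; linarith, hN.of_gap_eq hs₂ hg (by norm_num),
      by rw [hd₂]; linarith⟩, hg⟩

lemma stepConfig_of_finish_of_isS2ne_of_not_act (hi : c.outcome u A act i = (.finish, 0))
    (hd : c.odist u i ≤ 1) (hN : c.IsS2ne u A (!i)) (hd' : 1/2 ≤ c.odist u (!i))
    (hna : act (!i) = false) : (stepConfig u A act c).FinishS2ne u A i := by
  obtain ⟨hs₁, hs₂, hg, hd₁, hd₂⟩ := stepConfig_of_outcome hi (outcome_of_not_act hna)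
  norm_num at hg hd₁ hd₂
  exact ⟨hs₁, by rw [hd₁]; exact hd, hN.of_gap_eq hs₂ (t := 1) (by simpa using hg) one_pos,
    by rw [hd₂]; exact hd'⟩

lemma FinishS2ne.stepConfig (hC : c.FinishS2ne u A i) (ha : act (!i) = true) :
    ((stepConfig u A act c).FinishS2ne u A i ∧
        (stepConfig u A act c).gap = (1/2 : ℝ) • c.gap) ∨
      (stepConfig u A act c).FinishS3 u i :=
  stepConfig_of_finish_of_isS2ne_of_act (outcome_of_finish hC.1 hC.2.1) hC.2.1 hC.2.2.1 hC.2.2.2 ha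

lemma S3S2ne.stepConfig_of_not_act (hu : ∀ j, 0 < u j) (hB : c.S3S2ne u A i)
    (hna : act i = false) (ha : act (!i) = true) :
    (stepConfig u A act c).S3S2ne u A i ∨ (stepConfig u A act c).S3S3 u i ∨
      (stepConfig u A act c).FinishS3 u (!i) := by
  obtain ⟨hs, hd, hN, hlow⟩ := hB
  have hi := outcome_of_not_act (u := u) (A := A) (c := c) hna
  rcases lt_or_ge (c.odist u (!i)) (1/2) with h1 | h1
  · have hd4 : 1/4 ≤ c.odist u i := hlow.resolve_right (by linarith)
    have h0 := odist_pos_of_pos hu (j := i) (by linarith) (!i)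
    obtain ⟨hs₁, hs₂, -, hd₁, hd₂⟩ :=
      stepConfig_of_outcome hi (outcome_of_isS2ne_of_lt_half hN ha h0 h1)
    norm_num at hd₁ hd₂
    refine Or.inr (Or.inr ⟨hs₂, by rw [hd₂]; linarith, ?_, ?_⟩)
    · rw [Bool.not_not, hs₁, hs]
    · rw [Bool.not_not, hd₁]; exact hd4
  rcases lt_or_ge (c.odist u (!i)) 1 with h2 | h2
  · obtain ⟨hs₁, hs₂, -, hd₁, hd₂⟩ :=
      stepConfig_of_outcome hi (outcome_of_isS2ne_of_lt_one hN ha h1 h2)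
    norm_num at hd₁ hd₂
    exact Or.inr (Or.inl
      ⟨by rw [hs₁, hs], by rw [hd₁]; linarith, hs₂, by rw [hd₂]; linarith⟩)
  · obtain ⟨hs₁, hs₂, hg, hd₁, hd₂⟩ :=
      stepConfig_of_outcome hi (outcome_of_isS2ne_of_one_le hN ha h2)
    norm_num at hg hd₁ hd₂
    exact Or.inl ⟨by rw [hs₁, hs], by rw [hd₁]; linarith, hN.of_gap_eq hs₂ hg (by norm_num),
      Or.inr (by rw [hd₂]; linarith)⟩

lemma S3S2ne.stepConfig_of_act (hu : ∀ j, 0 < u j) (hB : c.S3S2ne u A i) (ha : act i = true) :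
    (stepConfig u A act c).Coincident ∨ (stepConfig u A act c).FinishS2ne u A i ∨
      (stepConfig u A act c).FinishS3 u i ∨ (stepConfig u A act c).FinishS2eq u A i := by
  obtain ⟨hs, hd, hN, hlow⟩ := hB
  have h0 : 0 < c.odist u i := by
    rcases hlow with h | h
    · linarith
    · exact odist_pos_of_pos hu (by linarith) i
  have h0' := odist_pos_of_pos hu h0 (!i)
  rcases lt_or_ge (c.odist u i) (1/4) with h4 | h4
  · have hi := outcome_of_s3_of_lt (A := A) hs ha h0 h4
    have h2 : 1/2 ≤ c.odist u (!i) := hlow.resolve_left (by linarith)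
    cases ha' : act (!i)
    · exact Or.inr (Or.inl (stepConfig_of_finish_of_isS2ne_of_not_act hi (by linarith) hN h2 ha'))
    · rcases stepConfig_of_finish_of_isS2ne_of_act hi (by linarith) hN h2 ha' with h | h
      exacts [Or.inr (Or.inl h.1), Or.inr (Or.inr (Or.inl h))]
  have hi := outcome_of_s3_of_le (A := A) hs ha h4
  cases ha' : act (!i)
  · left
    apply coincident_stepConfig (i := i)
    rw [hi, outcome_of_not_act ha']
    norm_num
  rcases lt_or_ge (c.odist u (!i)) (1/2) with h1 | h1
  · left
    apply coincident_stepConfig (i := i)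
    rw [hi, outcome_of_isS2ne_of_lt_half hN ha' h0' h1]
    norm_num
  rcases lt_or_ge (c.odist u (!i)) 1 with h2 | h2
  · obtain ⟨hs₁, hs₂, -, hd₁, hd₂⟩ :=
      stepConfig_of_outcome hi (outcome_of_isS2ne_of_lt_one hN ha' h1 h2)
    norm_num at hd₁ hd₂
    exact Or.inr (Or.inr (Or.inl
      ⟨hs₁, by rw [hd₁]; linarith, hs₂, by rw [hd₂]; linarith⟩))
  · obtain ⟨hs₁, hs₂, hg, hd₁, hd₂⟩ :=
      stepConfig_of_outcome hi (outcome_of_isS2ne_of_one_le hN ha' h2)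
    norm_num at hd₁ hd₂
    refine Or.inr (Or.inr (Or.inr
      ⟨hs₁, by rw [hd₁]; linarith, ?_, by rw [hd₂]; linarith⟩))
    exact hN.isS2eq_of_gap_eq hu hs₂ hg (by norm_num) (gap_ne_zero_of_odist_pos h0)

lemma BothS2ne.stepConfig_of_single (hN : ∀ j, c.IsS2ne u A j) (ha : act i = true)
    (hna : act (!i) = false) (h : 1/2 ≤ c.odist u i) :
    ((stepConfig u A act c).BothS2ne u A ∧ (stepConfig u A act c).gap = (1/2 : ℝ) • c.gap) ∨
      (stepConfig u A act c).S3S2ne u A i := by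
  have hj := outcome_of_not_act (u := u) (A := A) (c := c) hna
  rcases lt_or_ge (c.odist u i) 1 with h1 | h1
  · obtain ⟨hs₁, hs₂, hg, hd₁, -⟩ :=
      stepConfig_of_outcome (outcome_of_isS2ne_of_lt_one (hN i) ha h h1) hj
    norm_num at hg hd₁
    exact Or.inr ⟨hs₁, by rw [hd₁]; linarith, (hN (!i)).of_gap_eq hs₂ hg (by norm_num),
      Or.inl (by rw [hd₁]; linarith)⟩
  · obtain ⟨hs₁, hs₂, hg, hd₁, -⟩ :=
      stepConfig_of_outcome (outcome_of_isS2ne_of_one_le (hN i) ha h1) hj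
    norm_num at hg hd₁
    have hst : ∀ j, (stepConfig u A act c).st j = c.st j := by
      intro j
      cases i <;> cases j <;> assumption
    exact Or.inl ⟨⟨fun j => (hN j).of_gap_eq (hst j) hg (by norm_num), i,
      by rw [hd₁]; linarith⟩, hg⟩

lemma BothS2ne.stepConfig (hu : ∀ j, 0 < u j) (hA : c.BothS2ne u A)
    (hact : act false = true ∨ act true = true) :
    (stepConfig u A act c).Coincident ∨
      ((stepConfig u A act c).BothS2ne u A ∧
        (stepConfig u A act c).gap = (1/2 : ℝ) • c.gap) ∨
      ∃ i, (stepConfig u A act c).S3S2ne u A i ∨ (stepConfig u A act c).FinishS2ne u A i ∨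
        (stepConfig u A act c).FinishS3 u i := by
  obtain ⟨hN, j, hj⟩ := hA
  have hpos : ∀ k, 0 < c.odist u k := odist_pos_of_pos hu (j := j) (by linarith)
  have hN' : c.IsS2ne u A (!!j) := by simpa using hN j
  have hj' : 1/2 ≤ c.odist u (!!j) := by simpa using hj
  cases ha : act j <;> cases ha' : act (!j)
  · cases j <;> simp_all
  · rcases le_or_gt (1/2) (c.odist u (!j)) with h | h
    · rcases stepConfig_of_single hN ha' (by simpa using ha) h with h | h
      exacts [Or.inr (Or.inl h), Or.inr (Or.inr ⟨!j, Or.inl h⟩)]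
    · refine Or.inr (Or.inr ⟨!j, Or.inr (Or.inl ?_)⟩)
      exact stepConfig_of_finish_of_isS2ne_of_not_act
        (outcome_of_isS2ne_of_lt_half (hN _) ha' (hpos _) h) (by linarith) hN' hj'
        (by simpa using ha)
  · rcases stepConfig_of_single hN ha ha' hj with h | h
    exacts [Or.inr (Or.inl h), Or.inr (Or.inr ⟨j, Or.inl h⟩)]
  · rcases le_or_gt (1/2) (c.odist u (!j)) with h | h
    · left
      apply coincident_stepConfig (i := j)
      rw [outcome_snd_of_isS2ne (hN j) ha hj, outcome_snd_of_isS2ne (hN _) ha' h]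
      norm_num
    · rcases stepConfig_of_finish_of_isS2ne_of_act
        (outcome_of_isS2ne_of_lt_half (hN _) ha' (hpos _) h) (by linarith) hN' hj'
        (by simpa using ha) with h | h
      exacts [Or.inr (Or.inr ⟨!j, Or.inr (Or.inl h.1)⟩),
        Or.inr (Or.inr ⟨!j, Or.inr (Or.inr h)⟩)]

end Config

lemma FairSched.act_or_act_not {sched : ℕ → Bool → Bool} (h : FairSched sched) (n : ℕ)
    (i : Bool) : sched n i = true ∨ sched n (!i) = true := by
  cases i
  · exact h.1 n
  · exact (h.1 n).symm

lemma FairSched.act_not_of_not_act {sched : ℕ → Bool → Bool} (h : FairSched sched) {n : ℕ}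
    {i : Bool} (hna : sched n i = false) : sched n (!i) = true :=
  (h.act_or_act_not n i).resolve_left (by simp [hna])

def EventuallyCoincident (u : Bool → ℝ) (A : Bool → Frame) (sched : ℕ → Bool → Bool)
    (c0 : Config) (n : ℕ) : Prop :=
  ∃ m, n ≤ m ∧ (run u A sched c0 m).Coincident

section Run

open Config

variable {u : Bool → ℝ} {A : Bool → Frame} {sched : ℕ → Bool → Bool} {c0 : Config}
  {n : ℕ}

lemma run_succ (n : ℕ) :
    run u A sched c0 (n + 1) = stepConfig u A (sched n) (run u A sched c0 n) := rfl

lemma run_eq_of_coincident {N : ℕ} (h : (run u A sched c0 N).Coincident) (hn : N ≤ n) :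
    run u A sched c0 n = run u A sched c0 N := by
  induction n, hn using Nat.le_induction with
  | base => rfl
  | succ n _ ih => rw [run_succ, ih, stepConfig_eq_self (outcome_of_coincident h)]

lemma solves_of_coincident {N : ℕ} (h : (run u A sched c0 N).Coincident) :
    Solves u A sched c0 := by
  refine ⟨N, fun n hn i => ?_⟩
  rw [run_eq_of_coincident h hn]
  cases i
  exacts [rfl, h.symm]

lemma EventuallyCoincident.of_exists (h : ∃ m, n ≤ m ∧ EventuallyCoincident u A sched c0 m) :
    EventuallyCoincident u A sched c0 n := by
  obtain ⟨m, hnm, k, hmk, hk⟩ := h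
  exact ⟨k, hnm.trans hmk, hk⟩

lemma EventuallyCoincident.of_succ (h : EventuallyCoincident u A sched c0 (n + 1)) :
    EventuallyCoincident u A sched c0 n :=
  .of_exists ⟨n + 1, n.le_succ, h⟩

lemma eventuallyCoincident_of_finishS2eq (hsched : FairSched sched) {i : Bool}
    (h : (run u A sched c0 n).FinishS2eq u A i) : EventuallyCoincident u A sched c0 n :=
  exists_of_wait (hsched.2 (!i)) (P := fun n => (run u A sched c0 n).FinishS2eq u A i)
    (fun n hP hna => Or.inl (by
      rwa [run_succ, stepConfig_eq_self_of_finish hP.1 hP.2.1 (eq_false_of_ne_true hna)]))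
    (fun n hP ha => hP.stepConfig ha) h

lemma eventuallyCoincident_of_finishS3 (hsched : FairSched sched) {i : Bool}
    (h : (run u A sched c0 n).FinishS3 u i) : EventuallyCoincident u A sched c0 n :=
  exists_of_wait (hsched.2 (!i)) (P := fun n => (run u A sched c0 n).FinishS3 u i)
    (fun n hP hna => Or.inl (by
      rwa [run_succ, stepConfig_eq_self_of_finish hP.1 hP.2.1 (eq_false_of_ne_true hna)]))
    (fun n hP ha => hP.stepConfig ha) h

lemma eventuallyCoincident_of_s3S3 (hu : ∀ j, 0 < u j) (hsched : FairSched sched) {i : Bool}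
    (h : (run u A sched c0 n).S3S3 u i) : EventuallyCoincident u A sched c0 n := by
  rcases h.stepConfig hu (hsched.act_or_act_not n i) with h' | h'
  · exact ⟨n + 1, n.le_succ, h'⟩
  · exact (eventuallyCoincident_of_finishS3 hsched h').of_succ

lemma eventuallyCoincident_of_finishS2ne (hsched : FairSched sched) {i : Bool}
    (h : (run u A sched c0 n).FinishS2ne u A i) : EventuallyCoincident u A sched c0 n := by
  refine .of_exists <| exists_of_halving (hsched.2 (!i))
    (P := fun n => (run u A sched c0 n).FinishS2ne u A i)
    (fun n => (run u A sched c0 n).odist u (!i)) one_half_pos (fun _ hP => hP.2.2.2)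
    (fun n hP hna => Or.inl ⟨?_, ?_⟩) (fun n hP ha => ?_) h
  · rwa [run_succ, stepConfig_eq_self_of_finish hP.1 hP.2.1 (eq_false_of_ne_true hna)]
  · rw [run_succ, stepConfig_eq_self_of_finish hP.1 hP.2.1 (eq_false_of_ne_true hna)]
  · rcases hP.stepConfig ha with ⟨hC, hg⟩ | hE
    · exact Or.inl ⟨hC, (odist_of_gap_eq_half hg _).le⟩
    · exact Or.inr (eventuallyCoincident_of_finishS3 hsched hE)

lemma eventuallyCoincident_of_s3S2ne (hu : ∀ j, 0 < u j) (hsched : FairSched sched) {i : Bool}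
    (h : (run u A sched c0 n).S3S2ne u A i) : EventuallyCoincident u A sched c0 n := by
  refine .of_exists <| exists_of_wait (hsched.2 i)
    (P := fun n => (run u A sched c0 n).S3S2ne u A i) (fun n hP hna => ?_) (fun n hP ha => ?_) h
  · rcases hP.stepConfig_of_not_act hu (eq_false_of_ne_true hna)
      (hsched.act_not_of_not_act (eq_false_of_ne_true hna)) with hB | hD | hE
    · exact Or.inl hB
    · exact Or.inr (eventuallyCoincident_of_s3S3 hu hsched hD)
    · exact Or.inr (eventuallyCoincident_of_finishS3 hsched hE)
  · rcases hP.stepConfig_of_act hu ha with h | hC | hE | hF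
    · exact ⟨n + 1, le_rfl, h⟩
    · exact eventuallyCoincident_of_finishS2ne hsched hC
    · exact eventuallyCoincident_of_finishS3 hsched hE
    · exact eventuallyCoincident_of_finishS2eq hsched hF

lemma eventuallyCoincident_of_bothS2ne (hu : ∀ j, 0 < u j) (hsched : FairSched sched)
    (h : (run u A sched c0 n).BothS2ne u A) : EventuallyCoincident u A sched c0 n := by
  let f n := (run u A sched c0 n).odist u false + (run u A sched c0 n).odist u true
  have hlow : ∀ n, (run u A sched c0 n).BothS2ne u A → 1/2 ≤ f n := by
    rintro n ⟨-, j, hj⟩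
    have := odist_nonneg (c := run u A sched c0 n) hu
    cases j <;> linarith [this false, this true]
  have hstep : ∀ n, (run u A sched c0 n).BothS2ne u A →
      ((run u A sched c0 (n + 1)).BothS2ne u A ∧ f (n + 1) = f n / 2) ∨
        EventuallyCoincident u A sched c0 (n + 1) := by
    intro n hA
    rcases hA.stepConfig hu (hsched.1 n) with h | ⟨hA', hg⟩ | ⟨i, hB | hC | hE⟩
    · exact Or.inr ⟨n + 1, le_rfl, h⟩
    · refine Or.inl ⟨hA', ?_⟩
      simp only [f, run_succ, odist_of_gap_eq_half hg]
      ring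
    · exact Or.inr (eventuallyCoincident_of_s3S2ne hu hsched hB)
    · exact Or.inr (eventuallyCoincident_of_finishS2ne hsched hC)
    · exact Or.inr (eventuallyCoincident_of_finishS3 hsched hE)
  refine .of_exists <| exists_of_halving (hsched.2 false) f one_half_pos hlow
    (fun n hP _ => (hstep n hP).imp_left fun h => ⟨h.1, ?_⟩)
    (fun n hP _ => (hstep n hP).imp_left fun h => ⟨h.1, h.2.le⟩) h
  linarith [h.2, hlow n hP]

end Run

/-- Lemma 8: `(S_2^≠, S_2^≠, [1, ∞), [1, ∞))↓`. -/
theorem lemma_l2 :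
    Down Cond.s2ne Cond.s2ne (Set.Ici (1 : ℝ)) (Set.Ici (1 : ℝ)) := by
  intro u A hu c0 hr hdr hs _ sched hsched
  have hA : (run u A sched c0 0).BothS2ne u A := by
    refine ⟨fun j => ?_, false, ?_⟩
    · cases j
      exacts [hr, hs]
    · have : (1 : ℝ) ≤ (run u A sched c0 0).odist u false := hdr
      linarith
  obtain ⟨N, -, hN⟩ := eventuallyCoincident_of_bothS2ne hu hsched hA
  exact solves_of_coincident hN
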